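/- The sequence L is subadditive: for all integers k, m ≥ 0, L_{k+m} ≤ L_k + L_m. -/

import Mathlib

/-!
With `w i = 2 ^ i / (i + 1)!` and `S p = ∑_{i<p} (-1)^i w i` one has `L n = ∑_{j<n} S (j + 1)`,
hence `L (k + m) - L k - L m = ∑_{j<m} (S (k + j + 1) - S (j + 1)) = -∑_{j<m} (-1)^j A j` with
`A j = ∑_{i<k} (-1)^i w (j + i + 1)`. On the positive integers `w` is nonnegative, decreasing and
convex, so `A` is nonnegative and decreasing, and an alternating sum of such a sequence is
nonnegative.
-/

/-- `Lseg n = Σ_{k=1}^{n} (−1)^{k+1} (2^{k−1}/k!) (n−k+1)`, the expected number of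
transmissions in one slot from a fully occupied segment of `n` nodes (so `Lseg 0 = 0`). -/
noncomputable def Lseg (n : ℕ) : ℝ :=
  ∑ k ∈ Finset.Icc 1 n,
    (-1 : ℝ) ^ (k + 1) * (2 ^ (k - 1) / (Nat.factorial k : ℝ)) * ((n : ℝ) - (k : ℝ) + 1)

open Finset

theorem alternating_sum_mem_Icc {f : ℕ → ℝ} (hf : Antitone f) (h0 : ∀ i, 0 ≤ f i) (n : ℕ) :
    ∑ i ∈ range n, (-1) ^ i * f i ∈ Set.Icc 0 (f 0) := by
  induction n generalizing f with
  | zero => simpa using h0 0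
  | succ n ih =>
    have hshift : ∑ i ∈ range (n + 1), (-1) ^ i * f i
        = f 0 - ∑ i ∈ range n, (-1) ^ i * f (i + 1) := by
      simp only [sum_range_succ', pow_succ, pow_zero, mul_neg_one, neg_mul, sum_neg_distrib]
      ring
    obtain ⟨hlo, hhi⟩ :=
      ih (f := fun i => f (i + 1)) (fun _ _ h => hf (by omega)) (fun i => h0 (i + 1))
    rw [hshift]
    exact ⟨by linarith [hf (Nat.zero_le 1)], by linarith⟩

theorem alternating_sum_nonneg {f : ℕ → ℝ} (hf : Antitone f) (h0 : ∀ i, 0 ≤ f i) (n : ℕ) :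
    0 ≤ ∑ i ∈ range n, (-1) ^ i * f i :=
  (alternating_sum_mem_Icc hf h0 n).1

theorem sum_range_mul_sub_eq_sum_partial_sums (g : ℕ → ℝ) (n : ℕ) :
    ∑ i ∈ range n, g i * ((n : ℝ) - i) = ∑ j ∈ range n, ∑ i ∈ range (j + 1), g i := by
  induction n with
  | zero => simp
  | succ n ih =>
    have hsplit : ∑ i ∈ range (n + 1), g i * (((n + 1 : ℕ) : ℝ) - i)
        = ∑ i ∈ range (n + 1), g i * ((n : ℝ) - i) + ∑ i ∈ range (n + 1), g i := by
      rw [← sum_add_distrib]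
      exact sum_congr rfl fun i _ => by push_cast; ring
    rw [hsplit, sum_range_succ _ n, ih, sum_range_succ (fun j => ∑ i ∈ range (j + 1), g i)]
    simp

theorem antitone_alternating_window {g : ℕ → ℝ} (hg : Antitone g)
    (hd : Antitone fun i => g i - g (i + 1)) (k : ℕ) :
    Antitone fun p => ∑ i ∈ range k, (-1) ^ i * g (p + i) := by
  refine antitone_nat_of_succ_le fun p => ?_
  have hdiff := alternating_sum_nonneg (f := fun i => g (p + i) - g (p + i + 1))
    (fun _ _ h => hd (by omega)) (fun i => sub_nonneg.2 (hg (by omega))) k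
  simp only [mul_sub, sum_sub_distrib, sub_nonneg] at hdiff
  simpa only [add_right_comm p 1] using hdiff

theorem subadditive_sum_range_alternating_mul_sub {f : ℕ → ℝ} (h0 : ∀ i, 0 ≤ f (i + 1))
    (hf : Antitone fun i => f (i + 1)) (hd : Antitone fun i => f (i + 1) - f (i + 2)) :
    Subadditive fun n => ∑ i ∈ range n, (-1) ^ i * f i * ((n : ℝ) - i) := by
  intro k m
  set S : ℕ → ℝ := fun p => ∑ i ∈ range p, (-1) ^ i * f i
  set A : ℕ → ℝ := fun j => ∑ i ∈ range k, (-1) ^ i * f (j + i + 1)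
  have hL (n : ℕ) : ∑ i ∈ range n, (-1) ^ i * f i * ((n : ℝ) - i) = ∑ j ∈ range n, S (j + 1) :=
    sum_range_mul_sub_eq_sum_partial_sums _ n
  have hS (j : ℕ) : S (k + j + 1) = S (j + 1) - (-1) ^ j * A j := by
    simp only [S, A, show k + j + 1 = j + 1 + k by ring]
    rw [sum_range_add, mul_sum, ← sub_neg_eq_add, ← sum_neg_distrib]
    congr 1
    refine sum_congr rfl fun i _ => ?_
    rw [add_right_comm j 1 i]
    ring
  have hA : Antitone A := antitone_alternating_window (g := fun i => f (i + 1)) hf hd k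
  have hA0 (j : ℕ) : 0 ≤ A j :=
    alternating_sum_nonneg (f := fun i => f (j + i + 1)) (fun _ _ h => hf (by omega))
      (fun _ => h0 _) k
  simp only [hL, sum_range_add, hS, sum_sub_distrib]
  linarith [alternating_sum_nonneg hA hA0 m]

namespace Lseg

noncomputable def weight (i : ℕ) : ℝ := 2 ^ i / (i + 1).factorial

theorem weight_nonneg (i : ℕ) : 0 ≤ weight i := by
  unfold weight; positivity

theorem weight_succ (i : ℕ) : weight (i + 1) = 2 / (i + 2) * weight i := by
  simp only [weight, Nat.factorial_succ (i + 1), pow_succ]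
  push_cast
  field_simp
  ring

theorem antitone_weight : Antitone weight := by
  refine antitone_nat_of_succ_le fun i => ?_
  rw [weight_succ]
  refine mul_le_of_le_one_left (weight_nonneg i) ?_
  rw [div_le_one (by positivity)]
  linarith [(Nat.cast_nonneg i : (0 : ℝ) ≤ i)]

theorem weight_sub_weight_succ (i : ℕ) : weight i - weight (i + 1) = i / (i + 2) * weight i := by
  rw [weight_succ]
  field_simp
  ring

theorem antitone_weight_sub_weight_succ : Antitone fun i => weight (i + 1) - weight (i + 2) := by
  refine antitone_nat_of_succ_le fun i => ?_
  show weight (i + 1 + 1) - weight (i + 1 + 1 + 1) ≤ weight (i + 1) - weight (i + 1 + 1)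
  rw [weight_sub_weight_succ, weight_sub_weight_succ, weight_succ (i + 1), ← mul_assoc]
  refine mul_le_mul_of_nonneg_right ?_ (weight_nonneg _)
  rw [div_mul_div_comm, div_le_div_iff₀ (by positivity) (by positivity)]
  have hi : (0 : ℝ) ≤ i := Nat.cast_nonneg i
  push_cast
  nlinarith [mul_nonneg hi hi, mul_nonneg (mul_nonneg hi hi) hi]

theorem eq_sum_range (n : ℕ) : Lseg n = ∑ i ∈ range n, (-1) ^ i * weight i * ((n : ℝ) - i) := by
  rw [Lseg, ← Ico_add_one_right_eq_Icc, sum_Ico_eq_sum_range, Nat.add_sub_cancel]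
  refine sum_congr rfl fun i _ => ?_
  simp only [weight, add_comm 1 i, Nat.add_sub_cancel]
  push_cast
  ring

end Lseg

theorem Lseg_subadditive (k m : ℕ) : Lseg (k + m) ≤ Lseg k + Lseg m := by
  simp only [Lseg.eq_sum_range]
  exact subadditive_sum_range_alternating_mul_sub (fun i => Lseg.weight_nonneg _)
    (Lseg.antitone_weight.comp_monotone add_left_mono) Lseg.antitone_weight_sub_weight_succ k m
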